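/- arXiv:1609.09856 — 7 statements merged into one kernel-verified Lean document; each statement's English description precedes it below -/
import Mathlib

section
/- Let (𝔄, H, (ι_j)_{j∈ℤ}, Ω) be an exchangeable stochastic process. Then the following are equivalent: (a) [product state condition] ⟨XYΩ, Ω⟩ = ⟨XΩ, Ω⟩·⟨YΩ, Ω⟩ whenever I₁, I₂ ⊆ ℤ are finite and disjoint, X ∈ 𝔄_{I₁} and Y ∈ 𝔄_{I₂}; (b) [weak clustering] for every finite I₀ ⊆ ℤ, every X ∈ 𝔄_{I₀}, every m ≥ 1, k₁,…,k_m ∈ ℤ and B₁,…,B_m ∈ 𝔄, the averages (1/|P_I|) Σ_{g ∈ P_I} ⟨X · ι_{g(k₁)}(B₁)⋯ι_{g(k_m)}(B_m) Ω, Ω⟩ converge, along the net of finite subsets I ⊆ ℤ directed by inclusion, to ⟨XΩ, Ω⟩·⟨ι_{k₁}(B₁)⋯ι_{k_m}(B_m)Ω, Ω⟩. -/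
open Filter

variable {A H : Type*} [NormedRing A] [StarRing A] [CStarRing A]
  [NormedAlgebra ℂ A] [StarModule ℂ A] [CompleteSpace A]
  [NormedAddCommGroup H] [InnerProductSpace ℂ H] [CompleteSpace H]

/-- The *-subalgebra `𝔄_I` of `B(H)` generated by `⋃_{j ∈ I} ι_j(𝔄)`. -/
noncomputable def localAlgebra (ι : ℤ → A →⋆ₐ[ℂ] (H →L[ℂ] H)) (I : Finset ℤ) :
    StarSubalgebra ℂ (H →L[ℂ] H) :=
  StarAlgebra.adjoin ℂ (⋃ j ∈ I, Set.range fun a : A => ι j a)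

/-- The permutation of `ℤ` obtained by extending a permutation of the finite set `I`
by the identity outside `I`; as `g` ranges over `Equiv.Perm I` these are exactly the
elements of the group `P_I` of permutations of `ℤ` fixing `ℤ ∖ I` pointwise. -/
def extendPerm (I : Finset ℤ) (g : Equiv.Perm {x : ℤ // x ∈ I}) : Equiv.Perm ℤ :=
  g.extendDomain (Equiv.refl _)

/-!
Write `φ T = ⟪Ω, T Ω⟫` and `M_σ = ι_{σ k₁}(B₁)⋯ι_{σ kₘ}(Bₘ)`. A uniformly random `g ∈ P_I` sends
some `kᵢ` into a fixed finite set `I₀` with probability at most `m |I₀| / |I| → 0`, and the terms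
`φ (X M_g)` are uniformly bounded; so the averages converge to any value `c` that `φ (X M_σ)` takes
for every finitely supported `σ` moving all `kᵢ` out of `I₀`.

For a product state `φ (X M_σ) = φ X · φ M_σ = φ X · φ M_id` by exchangeability. Conversely, for
`X ∈ 𝔄_{I₁}` and all `kᵢ ∉ I₁`, the map `kᵢ ↦ σ kᵢ` extends to a finitely supported permutation
fixing `I₁` pointwise, so exchangeability gives `c = φ (X M_id)`, and weak clustering identifies
this limit with `φ X · φ M_id`. Both conditions are linear in the monomials, which span the local
algebras.
-/

section Counting

open Finset

variable {α : Type*} [Fintype α] [DecidableEq α]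

theorem Equiv.Perm.card_filter_apply_mem_eq (x y : α) (s : Finset α) :
    #{g : Equiv.Perm α | g x ∈ s} = #{g : Equiv.Perm α | g y ∈ s} :=
  card_equiv (Equiv.mulRight (Equiv.swap x y)) fun g => by simp

theorem Equiv.Perm.card_filter_apply_mem_mul_card (x : α) (s : Finset α) :
    #{g : Equiv.Perm α | g x ∈ s} * Fintype.card α = Fintype.card (Equiv.Perm α) * #s := by
  have hcount := sum_card_bipartiteAbove_eq_sum_card_bipartiteBelow
    (s := (univ : Finset (Equiv.Perm α))) (t := univ) (fun g y => g y ∈ s)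
  have hrow (g : Equiv.Perm α) : #(univ.bipartiteAbove (fun g y => g y ∈ s) g) = #s :=
    card_equiv g fun y => by simp [bipartiteAbove]
  simp only [hrow, bipartiteBelow, card_filter_apply_mem_eq _ x, sum_const, card_univ,
    smul_eq_mul] at hcount
  rw [mul_comm, ← hcount]

theorem Equiv.Perm.card_filter_exists_apply_mem_div_le [Nonempty α] (t s : Finset α) :
    (#{g : Equiv.Perm α | ∃ x ∈ t, g x ∈ s} : ℝ) / Fintype.card (Equiv.Perm α)
      ≤ #t * #s / Fintype.card α := by
  have hunion : #{g : Equiv.Perm α | ∃ x ∈ t, g x ∈ s} * Fintype.card α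
      ≤ #t * #s * Fintype.card (Equiv.Perm α) :=
    calc #{g : Equiv.Perm α | ∃ x ∈ t, g x ∈ s} * Fintype.card α
        ≤ (∑ x ∈ t, #{g : Equiv.Perm α | g x ∈ s}) * Fintype.card α := by
          gcongr
          refine (card_le_card fun g hg => ?_).trans card_biUnion_le
          simpa using hg
      _ = #t * #s * Fintype.card (Equiv.Perm α) := by
          rw [sum_mul, sum_congr rfl fun x _ => card_filter_apply_mem_mul_card x s, sum_const,
            smul_eq_mul, mul_comm (Fintype.card _), mul_assoc]
  rw [div_le_div_iff₀ (by positivity) (by positivity)]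
  exact_mod_cast hunion

end Counting

theorem tendsto_card_finset_atTop {α : Type*} [Infinite α] :
    Tendsto (fun s : Finset α => s.card) atTop atTop :=
  tendsto_atTop_atTop.2 fun n =>
    let ⟨t, _, ht⟩ := Infinite.exists_superset_card_eq ∅ n (by simp)
    ⟨t, fun s hs => ht ▸ Finset.card_le_card hs⟩

section PermAverage

open Finset

theorem extendPerm_apply_of_mem (I : Finset ℤ) (g : Equiv.Perm {x : ℤ // x ∈ I}) {x : ℤ}
    (hx : x ∈ I) : extendPerm I g x = g ⟨x, hx⟩ := by
  simpa [extendPerm] using Equiv.Perm.extendDomain_apply_subtype g (Equiv.refl _) hx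

theorem extendPerm_apply_of_notMem (I : Finset ℤ) (g : Equiv.Perm {x : ℤ // x ∈ I}) {x : ℤ}
    (hx : x ∉ I) : extendPerm I g x = x := by
  simpa [extendPerm] using Equiv.Perm.extendDomain_apply_not_subtype g (Equiv.refl _) hx

theorem finite_extendPerm_ne (I : Finset ℤ) (g : Equiv.Perm {x : ℤ // x ∈ I}) :
    {x | extendPerm I g x ≠ x}.Finite :=
  I.finite_toSet.subset fun _ hx => by_contra fun hxI => hx (extendPerm_apply_of_notMem I g hxI)

theorem exists_extendPerm_eqOn (σ : Equiv.Perm ℤ) (K : Finset ℤ) :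
    ∃ g : Equiv.Perm {x // x ∈ K ∪ K.image σ}, ∀ x ∈ K, extendPerm _ g x = σ x := by
  obtain ⟨g, hg⟩ := Equiv.Perm.exists_extending_pair
    (fun x : {x // x ∈ K} => (⟨x, mem_union_left _ x.2⟩ : {x // x ∈ K ∪ K.image σ}))
    (fun x => ⟨σ x, mem_union_right _ (mem_image_of_mem σ x.2)⟩)
    (fun x y h => Subtype.ext (Subtype.mk.inj h))
    (fun x y h => Subtype.ext (σ.injective (Subtype.mk.inj h)))
  exact ⟨g, fun x hx => by rw [extendPerm_apply_of_mem _ _ (mem_union_left _ hx), hg ⟨x, hx⟩]⟩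

theorem norm_inv_card_mul_sum_sub_le {β : Type*} [Fintype β] [Nonempty β] {f : β → ℂ} {c : ℂ}
    {C : ℝ} (s : Finset β) (hs : ∀ b ∉ s, f b = c) (hC : ∀ b, ‖f b - c‖ ≤ C) :
    ‖(Fintype.card β : ℂ)⁻¹ * ∑ b, f b - c‖ ≤ #s / Fintype.card β * C := by
  have hcard : (Fintype.card β : ℂ) ≠ 0 := Nat.cast_ne_zero.2 Fintype.card_ne_zero
  have hsum : ∑ b, (f b - c) = ∑ b ∈ s, (f b - c) :=
    (sum_subset (subset_univ s) fun b _ hb => by rw [hs b hb, sub_self]).symm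
  have hmean : (Fintype.card β : ℂ)⁻¹ * ∑ b, f b - c = (Fintype.card β : ℂ)⁻¹ * ∑ b, (f b - c) := by
    rw [sum_sub_distrib, sum_const, card_univ, nsmul_eq_mul, mul_sub, inv_mul_cancel_left₀ hcard]
  calc ‖(Fintype.card β : ℂ)⁻¹ * ∑ b, f b - c‖
      = (Fintype.card β : ℝ)⁻¹ * ‖∑ b ∈ s, (f b - c)‖ := by
        rw [hmean, hsum, norm_mul, norm_inv, Complex.norm_natCast]
    _ ≤ (Fintype.card β : ℝ)⁻¹ * (#s * C) := by
        gcongr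
        exact (norm_sum_le _ _).trans (by simpa using sum_le_sum fun b _ => hC b)
    _ = #s / Fintype.card β * C := by ring

noncomputable def permAverage (f : Equiv.Perm ℤ → ℂ) (I : Finset ℤ) : ℂ :=
  (Fintype.card (Equiv.Perm {x : ℤ // x ∈ I}) : ℂ)⁻¹ *
    ∑ g : Equiv.Perm {x : ℤ // x ∈ I}, f (extendPerm I g)

theorem norm_permAverage_sub_le {f : Equiv.Perm ℤ → ℂ} {c : ℂ} {C : ℝ} {K I₀ I : Finset ℤ}
    (hKI : K ⊆ I) (hI : I.Nonempty) (hC : ∀ σ, ‖f σ - c‖ ≤ C)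
    (hf : ∀ σ : Equiv.Perm ℤ, {x | σ x ≠ x}.Finite → (∀ x ∈ K, σ x ∉ I₀) → f σ = c) :
    ‖permAverage f I - c‖ ≤ #K * #I₀ / #I * C := by
  have : Nonempty {x // x ∈ I} := hI.to_subtype
  calc ‖permAverage f I - c‖
      ≤ #{g : Equiv.Perm {x // x ∈ I} | ∃ x ∈ K.subtype (· ∈ I), g x ∈ I₀.subtype (· ∈ I)}
          / Fintype.card (Equiv.Perm {x // x ∈ I}) * C := by
        refine norm_inv_card_mul_sum_sub_le _ (fun g hg => hf _ (finite_extendPerm_ne I g)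
          fun x hx hxI₀ => hg ?_) fun g => hC _
        simp only [mem_filter, mem_univ, true_and, mem_subtype]
        exact ⟨⟨x, hKI hx⟩, hx, by rwa [← extendPerm_apply_of_mem]⟩
    _ ≤ #K * #I₀ / #I * C := by
        refine mul_le_mul_of_nonneg_right ?_ ((norm_nonneg _).trans (hC 1))
        refine (Equiv.Perm.card_filter_exists_apply_mem_div_le _ _).trans ?_
        rw [Fintype.card_coe, card_subtype, card_subtype]
        gcongr <;> exact filter_subset _ _

theorem tendsto_permAverage {f : Equiv.Perm ℤ → ℂ} {c : ℂ} {C : ℝ} (K I₀ : Finset ℤ)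
    (hC : ∀ σ, ‖f σ‖ ≤ C)
    (hf : ∀ σ : Equiv.Perm ℤ, {x | σ x ≠ x}.Finite → (∀ x ∈ K, σ x ∉ I₀) → f σ = c) :
    Tendsto (permAverage f) atTop (nhds c) := by
  rw [tendsto_iff_norm_sub_tendsto_zero]
  have hlim : Tendsto (fun I : Finset ℤ => #K * #I₀ / (#I : ℝ) * (C + ‖c‖)) atTop (nhds 0) := by
    simpa using (tendsto_const_nhds.div_atTop
      (tendsto_natCast_atTop_atTop.comp tendsto_card_finset_atTop)).mul_const (C + ‖c‖)
  refine squeeze_zero' (.of_forall fun _ => norm_nonneg _) ?_ hlim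
  filter_upwards [eventually_ge_atTop (insert 0 K)] with I hI
  exact norm_permAverage_sub_le ((subset_insert 0 K).trans hI) ⟨0, hI (mem_insert_self 0 K)⟩
    (fun σ => norm_sub_le_of_le (hC σ) le_rfl) hf

end PermAverage

section Monomial

variable {J F R S : Type*} [FunLike F R S] (ι : J → F)

def monomial [Monoid S] {n : ℕ} (k : Fin n → J) (B : Fin n → R) : S :=
  (List.ofFn fun i => ι (k i) (B i)).prod

theorem monomial_fin_zero [Monoid S] (k : Fin 0 → J) (B : Fin 0 → R) : monomial ι k B = 1 := rfl

theorem monomial_append [Monoid S] {n m : ℕ} (k : Fin n → J) (B : Fin n → R) (k' : Fin m → J)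
    (B' : Fin m → R) :
    monomial ι (Fin.append k k') (Fin.append B B') = monomial ι k B * monomial ι k' B' := by
  simp [monomial, List.ofFn_add, Fin.append_right]

theorem norm_monomial_le [Norm R] [SeminormedRing S] (hι : ∀ j a, ‖ι j a‖ ≤ ‖a‖)
    (h1 : ‖(1 : S)‖ ≤ 1) {n : ℕ} (k : Fin n → J) (B : Fin n → R) :
    ‖(monomial ι k B : S)‖ ≤ ∏ i, ‖B i‖ := by
  induction n with
  | zero => simpa [monomial_fin_zero] using h1
  | succ n ih =>
    rw [monomial, List.ofFn_succ, List.prod_cons, Fin.prod_univ_succ]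
    exact (norm_mul_le _ _).trans
      (mul_le_mul (hι _ _) (ih _ _) (norm_nonneg _) ((norm_nonneg _).trans (hι (k 0) (B 0))))

end Monomial

section LocalAlgebra

variable {A H : Type*} [NormedRing A] [StarRing A] [NormedAlgebra ℂ A]
  [NormedAddCommGroup H] [InnerProductSpace ℂ H] [CompleteSpace H]
  (ι : ℤ → A →⋆ₐ[ℂ] (H →L[ℂ] H))

theorem monomial_mem_localAlgebra {I : Finset ℤ} {n : ℕ} {k : Fin n → ℤ} (hk : ∀ i, k i ∈ I)
    (B : Fin n → A) : monomial ι k B ∈ localAlgebra ι I :=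
  list_prod_mem fun _ hT => by
    obtain ⟨i, rfl⟩ := List.mem_ofFn.1 hT
    exact StarAlgebra.subset_adjoin ℂ _ (Set.mem_biUnion (hk i) ⟨B i, rfl⟩)

theorem mem_span_monomial_of_mem_localAlgebra {I : Finset ℤ} {X : H →L[ℂ] H}
    (hX : X ∈ localAlgebra ι I) :
    X ∈ Submodule.span ℂ
      {T | ∃ (n : ℕ) (k : Fin n → ℤ) (B : Fin n → A), (∀ i, k i ∈ I) ∧ monomial ι k B = T} := by
  have hstar : star (⋃ j ∈ I, Set.range fun a : A => ι j a) = ⋃ j ∈ I, Set.range fun a => ι j a := by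
    ext T
    simp only [Set.mem_star, Set.mem_iUnion, Set.mem_range]
    constructor <;> rintro ⟨j, hj, a, ha⟩ <;> exact ⟨j, hj, star a, by simp [map_star, ha]⟩
  have hX' : X ∈ Subalgebra.toSubmodule (localAlgebra ι I).toSubalgebra := hX
  rw [localAlgebra, StarAlgebra.adjoin_eq_span, hstar, Set.union_self] at hX'
  refine Submodule.span_mono (fun T hT => ?_) hX'
  induction hT using Submonoid.closure_induction with
  | mem T hT =>
    obtain ⟨j, hj, a, rfl⟩ := by simpa using hT
    exact ⟨1, fun _ => j, fun _ => a, fun _ => hj, by simp [monomial]⟩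
  | one => exact ⟨0, Fin.elim0, Fin.elim0, fun i => i.elim0, monomial_fin_zero ι _ _⟩
  | mul T T' _ _ hT hT' =>
    obtain ⟨n, k, B, hk, rfl⟩ := hT
    obtain ⟨n', k', B', hk', rfl⟩ := hT'
    exact ⟨n + n', Fin.append k k', Fin.append B B', Fin.addCases (by simpa) (by simpa),
      monomial_append ι k B k' B'⟩

theorem eqOn_localAlgebra_of_monomial {I : Finset ℤ} {f g : (H →L[ℂ] H) →L[ℂ] ℂ}
    (h : ∀ (n : ℕ) (k : Fin n → ℤ) (B : Fin n → A), (∀ i, k i ∈ I) →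
      f (monomial ι k B) = g (monomial ι k B))
    {X : H →L[ℂ] H} (hX : X ∈ localAlgebra ι I) : f X = g X :=
  LinearMap.eqOn_span' (f := f.toLinearMap) (g := g.toLinearMap)
    (by rintro _ ⟨n, k, B, hk, rfl⟩; exact h n k B hk) (mem_span_monomial_of_mem_localAlgebra ι hX)

def IsExchangeable (Ω : H) : Prop :=
  ∀ g : Equiv.Perm ℤ, {x : ℤ | g x ≠ x}.Finite →
    ∀ n : ℕ, 1 ≤ n → ∀ (j : Fin n → ℤ) (a : Fin n → A),
      inner ℂ Ω (monomial ι (g ∘ j) a Ω) = inner ℂ Ω (monomial ι j a Ω)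

def IsProductState (Ω : H) : Prop :=
  ∀ I₁ I₂ : Finset ℤ, Disjoint I₁ I₂ → ∀ X ∈ localAlgebra ι I₁, ∀ Y ∈ localAlgebra ι I₂,
    inner ℂ Ω ((X * Y) Ω) = inner ℂ Ω (X Ω) * inner ℂ Ω (Y Ω)

def HasWeakClustering (Ω : H) : Prop :=
  ∀ I₀ : Finset ℤ, ∀ X ∈ localAlgebra ι I₀, ∀ m : ℕ, 1 ≤ m → ∀ (k : Fin m → ℤ) (B : Fin m → A),
    Tendsto (permAverage fun σ => inner ℂ Ω ((X * monomial ι (σ ∘ k) B) Ω)) atTop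
      (nhds (inner ℂ Ω (X Ω) * inner ℂ Ω (monomial ι k B Ω)))

variable {ι} {Ω : H}

theorem IsExchangeable.inner_monomial_comp (hι : IsExchangeable ι Ω) {g : Equiv.Perm ℤ}
    (hg : {x | g x ≠ x}.Finite) {n : ℕ} (k : Fin n → ℤ) (B : Fin n → A) :
    inner ℂ Ω (monomial ι (g ∘ k) B Ω) = inner ℂ Ω (monomial ι k B Ω) := by
  rcases n.eq_zero_or_pos with rfl | hn
  · rfl
  · exact hι g hg n hn k B

theorem IsExchangeable.inner_mul_monomial_comp (hι : IsExchangeable ι Ω) {I : Finset ℤ}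
    {X : H →L[ℂ] H} (hX : X ∈ localAlgebra ι I) {g : Equiv.Perm ℤ} (hg : {x | g x ≠ x}.Finite)
    (hgI : ∀ x ∈ I, g x = x) {m : ℕ} (k : Fin m → ℤ) (B : Fin m → A) :
    inner ℂ Ω ((X * monomial ι (g ∘ k) B) Ω) = inner ℂ Ω ((X * monomial ι k B) Ω) := by
  refine eqOn_localAlgebra_of_monomial ι
    (f := innerSL ℂ Ω ∘L ContinuousLinearMap.apply ℂ H (monomial ι (g ∘ k) B Ω))
    (g := innerSL ℂ Ω ∘L ContinuousLinearMap.apply ℂ H (monomial ι k B Ω)) (fun n j a hj => ?_) hX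
  have hcomp : g ∘ Fin.append j k = Fin.append j (g ∘ k) := by
    funext i
    exact Fin.addCases (fun i => by simp [hgI _ (hj i)]) (fun i => by simp) i
  simpa [← mul_apply_eq_comp, ← monomial_append, hcomp] using
    hι.inner_monomial_comp hg (Fin.append j k) (Fin.append a B)

theorem IsExchangeable.inner_mul_monomial_comp_of_notMem (hι : IsExchangeable ι Ω) {I : Finset ℤ}
    {X : H →L[ℂ] H} (hX : X ∈ localAlgebra ι I) (σ : Equiv.Perm ℤ) {m : ℕ} {k : Fin m → ℤ}
    (hk : ∀ i, k i ∉ I) (hσk : ∀ i, σ (k i) ∉ I) (B : Fin m → A) :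
    inner ℂ Ω ((X * monomial ι (σ ∘ k) B) Ω) = inner ℂ Ω ((X * monomial ι k B) Ω) := by
  obtain ⟨g, hg⟩ := exists_extendPerm_eqOn σ (Finset.univ.image k)
  have hσg : σ ∘ k = extendPerm _ g ∘ k :=
    funext fun i => (hg _ (Finset.mem_image_of_mem k (Finset.mem_univ i))).symm
  refine hσg ▸ hι.inner_mul_monomial_comp hX (finite_extendPerm_ne _ g)
    (fun x hx => extendPerm_apply_of_notMem _ _ fun hxJ => ?_) k B
  simp only [Finset.mem_union, Finset.mem_image, Finset.mem_univ, true_and] at hxJ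
  rcases hxJ with ⟨i, rfl⟩ | ⟨_, ⟨i, rfl⟩, rfl⟩
  exacts [hk i hx, hσk i hx]

end LocalAlgebra

theorem norm_inner_mul_monomial_le (ι : ℤ → A →⋆ₐ[ℂ] (H →L[ℂ] H)) (Ω : H) (X : H →L[ℂ] H)
    {n : ℕ} (k : Fin n → ℤ) (B : Fin n → A) :
    ‖inner ℂ Ω ((X * monomial ι k B) Ω)‖ ≤ ‖X‖ * (∏ i, ‖B i‖) * ‖Ω‖ ^ 2 := by
  let _ : CStarAlgebra A := {}
  have hM : ‖monomial ι k B‖ ≤ ∏ i, ‖B i‖ := norm_monomial_le ι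
    (fun j a => NonUnitalStarAlgHom.norm_apply_le (ι j) a) ContinuousLinearMap.norm_id_le k B
  calc ‖inner ℂ Ω ((X * monomial ι k B) Ω)‖ ≤ ‖Ω‖ * (‖X * monomial ι k B‖ * ‖Ω‖) :=
        (norm_inner_le_norm _ _).trans (by gcongr; exact ContinuousLinearMap.le_opNorm _ _)
    _ ≤ ‖Ω‖ * (‖X‖ * (∏ i, ‖B i‖) * ‖Ω‖) := by
        gcongr
        exact (norm_mul_le _ _).trans (by gcongr)
    _ = ‖X‖ * (∏ i, ‖B i‖) * ‖Ω‖ ^ 2 := by ring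

theorem IsProductState.hasWeakClustering {ι : ℤ → A →⋆ₐ[ℂ] (H →L[ℂ] H)} {Ω : H}
    (hexch : IsExchangeable ι Ω) (hPS : IsProductState ι Ω) : HasWeakClustering ι Ω := by
  intro I₀ X hX m _ k B
  refine tendsto_permAverage (Finset.univ.image k) I₀
    (fun σ => norm_inner_mul_monomial_le ι Ω X (σ ∘ k) B) fun σ hσ hσk => ?_
  have hdisj : Disjoint I₀ (Finset.univ.image (σ ∘ k)) := by
    refine Finset.disjoint_right.2 fun x hx => ?_
    obtain ⟨i, -, rfl⟩ := Finset.mem_image.1 hx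
    exact hσk _ (Finset.mem_image_of_mem k (Finset.mem_univ i))
  rw [hPS I₀ _ hdisj X hX _ (monomial_mem_localAlgebra ι
    (fun i => Finset.mem_image_of_mem _ (Finset.mem_univ i)) B), hexch.inner_monomial_comp hσ]

theorem HasWeakClustering.isProductState {ι : ℤ → A →⋆ₐ[ℂ] (H →L[ℂ] H)} {Ω : H} (hΩ : ‖Ω‖ = 1)
    (hexch : IsExchangeable ι Ω) (hWC : HasWeakClustering ι Ω) : IsProductState ι Ω := by
  intro I₁ I₂ hdisj X hX Y hY
  refine eqOn_localAlgebra_of_monomial ι (f := innerSL ℂ Ω ∘L X ∘L ContinuousLinearMap.apply ℂ H Ω)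
    (g := inner ℂ Ω (X Ω) • (innerSL ℂ Ω ∘L ContinuousLinearMap.apply ℂ H Ω))
    (fun n k B hk => ?_) hY
  simp only [ContinuousLinearMap.comp_apply, smul_apply,
    ContinuousLinearMap.apply_apply, innerSL_apply_apply, smul_eq_mul, ← mul_apply_eq_comp]
  rcases n.eq_zero_or_pos with rfl | hn
  · simp [monomial_fin_zero, inner_self_eq_norm_sq_to_K, hΩ]
  · refine tendsto_nhds_unique (tendsto_permAverage (Finset.univ.image k) I₁
      (fun σ => norm_inner_mul_monomial_le ι Ω X (σ ∘ k) B) fun σ _ hσk => ?_) (hWC I₁ X hX n hn k B)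
    exact hexch.inner_mul_monomial_comp_of_notMem hX σ (fun i => Finset.disjoint_right.1 hdisj (hk i))
      (fun i => hσk _ (Finset.mem_image_of_mem k (Finset.mem_univ i))) B

/-- for an exchangeable process, the product state condition is
equivalent to weak clustering along the net of finite subsets of `ℤ`. -/
theorem productState_iff_weakClustering
    (ι : ℤ → A →⋆ₐ[ℂ] (H →L[ℂ] H)) (Ω : H) (hΩ : ‖Ω‖ = 1)
    (hexch : ∀ g : Equiv.Perm ℤ, {x : ℤ | g x ≠ x}.Finite →
      ∀ n : ℕ, 1 ≤ n → ∀ (j : Fin n → ℤ) (a : Fin n → A),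
        (inner ℂ Ω (((List.ofFn fun i => ι (g (j i)) (a i)).prod) Ω) : ℂ)
          = inner ℂ Ω (((List.ofFn fun i => ι (j i) (a i)).prod) Ω)) :
    (∀ I₁ I₂ : Finset ℤ, Disjoint I₁ I₂ →
        ∀ X ∈ localAlgebra ι I₁, ∀ Y ∈ localAlgebra ι I₂,
          (inner ℂ Ω ((X * Y) Ω) : ℂ) = inner ℂ Ω (X Ω) * inner ℂ Ω (Y Ω))
      ↔
    (∀ I₀ : Finset ℤ, ∀ X ∈ localAlgebra ι I₀,
        ∀ m : ℕ, 1 ≤ m → ∀ (k : Fin m → ℤ) (B : Fin m → A),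
          Tendsto
            (fun I : Finset ℤ =>
              (Fintype.card (Equiv.Perm {x : ℤ // x ∈ I}) : ℂ)⁻¹ *
                ∑ g : Equiv.Perm {x : ℤ // x ∈ I},
                  (inner ℂ Ω ((X *
                    (List.ofFn fun i => ι (extendPerm I g (k i)) (B i)).prod) Ω) : ℂ))
            atTop
            (nhds ((inner ℂ Ω (X Ω) : ℂ) *
              inner ℂ Ω (((List.ofFn fun i => ι (k i) (B i)).prod) Ω)))) :=
  ⟨IsProductState.hasWeakClustering hexch, HasWeakClustering.isProductState hΩ hexch⟩
end

section
/- Let (𝔄, H, (ι_j)_{j∈ℤ}, Ω) be a stationary stochastic process satisfying the block singleton condition: ⟨XYZΩ, Ω⟩ = ⟨XZΩ, Ω⟩·⟨YΩ, Ω⟩ whenever I₁, I₂, I₃ ⊆ ℤ are finite with (I₁ ∪ I₃) ∩ I₂ = ∅, X ∈ 𝔄_{I₁}, Y ∈ 𝔄_{I₂} and Z ∈ 𝔄_{I₃}. Then the process converges to equilibrium along the shift: for all finite I₁, I₃ ⊆ ℤ, X ∈ 𝔄_{I₁}, Z ∈ 𝔄_{I₃}, every m ≥ 1, k₁,…,k_m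 ∈ ℤ and B₁,…,B_m ∈ 𝔄, one has lim_{n→∞} (1/n) Σ_{k=0}^{n−1} ⟨X · ι_{k₁+k}(B₁)⋯ι_{k_m+k}(B_m) · Z Ω, Ω⟩ = ⟨XZΩ, Ω⟩·⟨ι_{k₁}(B₁)⋯ι_{k_m}(B_m)Ω, Ω⟩. -/
/-!
Once the shift `l` has moved the indices `k i + l` out of `I₁ ∪ I₃`, the block singleton
condition factors the `l`-th summand as `⟨XZΩ, Ω⟩ ⟨ι_{k+l}(B) Ω, Ω⟩`, and stationarity removes
the shift from the second factor. So the summands are eventually constant, equal to the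
claimed limit, and Cesàro means preserve limits.
-/

open Filter

variable {A H : Type*} [NormedRing A] [StarRing A] [CStarRing A]
  [NormedAlgebra ℂ A] [StarModule ℂ A] [CompleteSpace A]
  [NormedAddCommGroup H] [InnerProductSpace ℂ H] [CompleteSpace H]

theorem Filter.Tendsto.cesaro_mul {𝕜 : Type*} [RCLike 𝕜] {u : ℕ → 𝕜} {x : 𝕜}
    (h : Tendsto u atTop (nhds x)) :
    Tendsto (fun n : ℕ => (n : 𝕜)⁻¹ * ∑ i ∈ Finset.range n, u i) atTop (nhds x) :=
  h.cesaro_smul.congr fun n => by simp [RCLike.real_smul_eq_coe_mul]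

theorem eventually_disjoint_image_add_natCast {κ : Type*} [Fintype κ] (I : Finset ℤ)
    (k : κ → ℤ) : ∀ᶠ l : ℕ in atTop, Disjoint I (Finset.univ.image fun i => k i + (l : ℤ)) := by
  have h : ∀ a ∈ I, ∀ i : κ, ∀ᶠ l : ℕ in atTop, k i + (l : ℤ) ≠ a := fun a _ i =>
    (tendsto_natCast_atTop_atTop.eventually_gt_atTop (a - k i)).mono fun l hl => by omega
  filter_upwards [(eventually_all_finset I).2 fun a ha => eventually_all.2 (h a ha)] with l hl
  simp only [Finset.disjoint_left, Finset.mem_image, Finset.mem_univ, true_and, not_exists]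
  exact fun a ha i => hl a ha i

theorem mem_localAlgebra {A H : Type*} [NormedRing A] [StarRing A] [NormedAlgebra ℂ A]
    [NormedAddCommGroup H] [InnerProductSpace ℂ H] [CompleteSpace H]
    (ι : ℤ → A →⋆ₐ[ℂ] (H →L[ℂ] H)) {I : Finset ℤ} {j : ℤ}
    (hj : j ∈ I) (a : A) : ι j a ∈ localAlgebra ι I :=
  StarAlgebra.subset_adjoin ℂ _ (Set.mem_biUnion hj ⟨a, rfl⟩)

theorem list_ofFn_prod_mem_localAlgebra {A H : Type*} [NormedRing A] [StarRing A]
    [NormedAlgebra ℂ A] [NormedAddCommGroup H] [InnerProductSpace ℂ H] [CompleteSpace H]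
    (ι : ℤ → A →⋆ₐ[ℂ] (H →L[ℂ] H)) {m : ℕ}
    (k : Fin m → ℤ) (B : Fin m → A) :
    (List.ofFn fun i => ι (k i) (B i)).prod ∈ localAlgebra ι (Finset.univ.image k) :=
  list_prod_mem fun _ hx => by
    obtain ⟨i, rfl⟩ := List.mem_ofFn.1 hx
    exact mem_localAlgebra ι (Finset.mem_image_of_mem k (Finset.mem_univ i)) (B i)

theorem inner_list_ofFn_prod_shift_natCast {A H : Type*} [Semiring A] [Algebra ℂ A] [Star A]
    [NormedAddCommGroup H] [InnerProductSpace ℂ H] [CompleteSpace H]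
    {ι : ℤ → A →⋆ₐ[ℂ] (H →L[ℂ] H)} {Ω : H}
    (hstat : ∀ n : ℕ, 1 ≤ n → ∀ (j : Fin n → ℤ) (a : Fin n → A),
      (inner ℂ Ω (((List.ofFn fun i => ι (j i + 1) (a i)).prod) Ω) : ℂ)
        = inner ℂ Ω (((List.ofFn fun i => ι (j i) (a i)).prod) Ω))
    {m : ℕ} (hm : 1 ≤ m) (k : Fin m → ℤ) (B : Fin m → A) (l : ℕ) :
    (inner ℂ Ω (((List.ofFn fun i => ι (k i + (l : ℤ)) (B i)).prod) Ω) : ℂ)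
      = inner ℂ Ω (((List.ofFn fun i => ι (k i) (B i)).prod) Ω) := by
  induction l with
  | zero => simp
  | succ l ih =>
    rw [← ih, ← hstat m hm (fun i => k i + (l : ℤ)) B]
    simp only [Nat.cast_succ, add_assoc]

theorem stationary_blockSingleton_convergesToEquilibrium_general
    (ι : ℤ → A →⋆ₐ[ℂ] (H →L[ℂ] H)) (Ω : H)
    (hstat : ∀ n : ℕ, 1 ≤ n → ∀ (j : Fin n → ℤ) (a : Fin n → A),
      (inner ℂ Ω (((List.ofFn fun i => ι (j i + 1) (a i)).prod) Ω) : ℂ)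
        = inner ℂ Ω (((List.ofFn fun i => ι (j i) (a i)).prod) Ω))
    (hbs : ∀ I₁ I₂ I₃ : Finset ℤ, Disjoint (I₁ ∪ I₃) I₂ →
      ∀ X ∈ localAlgebra ι I₁, ∀ Y ∈ localAlgebra ι I₂, ∀ Z ∈ localAlgebra ι I₃,
        (inner ℂ Ω ((X * Y * Z) Ω) : ℂ) = inner ℂ Ω ((X * Z) Ω) * inner ℂ Ω (Y Ω)) :
    ∀ I₁ I₃ : Finset ℤ, ∀ X ∈ localAlgebra ι I₁, ∀ Z ∈ localAlgebra ι I₃,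
      ∀ m : ℕ, 1 ≤ m → ∀ (k : Fin m → ℤ) (B : Fin m → A),
        Tendsto
          (fun n : ℕ => (n : ℂ)⁻¹ *
            ∑ l ∈ Finset.range n,
              (inner ℂ Ω ((X *
                (List.ofFn fun i => ι (k i + (l : ℤ)) (B i)).prod * Z) Ω) : ℂ))
          atTop
          (nhds ((inner ℂ Ω ((X * Z) Ω) : ℂ) *
            inner ℂ Ω (((List.ofFn fun i => ι (k i) (B i)).prod) Ω))) := by
  intro I₁ I₃ X hX Z hZ m hm k B
  apply Tendsto.cesaro_mul
  refine tendsto_const_nhds.congr' <|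
    (eventually_disjoint_image_add_natCast (I₁ ∪ I₃) k).mono fun l hl => ?_
  dsimp only
  rw [hbs I₁ _ I₃ hl X hX _ (list_ofFn_prod_mem_localAlgebra ι _ B) Z hZ,
    inner_list_ofFn_prod_shift_natCast hstat hm k B l]

/-- a stationary process satisfying the block singleton condition
converges to equilibrium along the Cesàro averages of the shift. -/
theorem stationary_blockSingleton_convergesToEquilibrium
    (ι : ℤ → A →⋆ₐ[ℂ] (H →L[ℂ] H)) (Ω : H) (hΩ : ‖Ω‖ = 1)
    (hstat : ∀ n : ℕ, 1 ≤ n → ∀ (j : Fin n → ℤ) (a : Fin n → A),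
      (inner ℂ Ω (((List.ofFn fun i => ι (j i + 1) (a i)).prod) Ω) : ℂ)
        = inner ℂ Ω (((List.ofFn fun i => ι (j i) (a i)).prod) Ω))
    (hbs : ∀ I₁ I₂ I₃ : Finset ℤ, Disjoint (I₁ ∪ I₃) I₂ →
      ∀ X ∈ localAlgebra ι I₁, ∀ Y ∈ localAlgebra ι I₂, ∀ Z ∈ localAlgebra ι I₃,
        (inner ℂ Ω ((X * Y * Z) Ω) : ℂ) = inner ℂ Ω ((X * Z) Ω) * inner ℂ Ω (Y Ω)) :
    ∀ I₁ I₃ : Finset ℤ, ∀ X ∈ localAlgebra ι I₁, ∀ Z ∈ localAlgebra ι I₃,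
      ∀ m : ℕ, 1 ≤ m → ∀ (k : Fin m → ℤ) (B : Fin m → A),
        Tendsto
          (fun n : ℕ => (n : ℂ)⁻¹ *
            ∑ l ∈ Finset.range n,
              (inner ℂ Ω ((X *
                (List.ofFn fun i => ι (k i + (l : ℤ)) (B i)).prod * Z) Ω) : ℂ))
          atTop
          (nhds ((inner ℂ Ω ((X * Z) Ω) : ℂ) *
            inner ℂ Ω (((List.ofFn fun i => ι (k i) (B i)).prod) Ω))) :=
  stationary_blockSingleton_convergesToEquilibrium_general ι Ω hstat hbs
end

section
/- Let λ > 0 and let φ_λ : ℂ[F(ℕ)] → ℂ be the linear functional on the group algebra of the free group on ℕ defined on group elements by φ_λ(w) := exp(−λ|w|), where |w| is the reduced word length of w, extended linearly. If S, T ⊆ ℕ are disjoint sets of generator indices, x is a finite linear combination of group elements whose reduced words use only generators with indices in S, and y is a finite linear combination of group elements whose reduced words use only generators with indices in T, then φ_λ(x·y) = φ_λ(x)·φ_λ(y) (the product state condition for Haagerup states). -/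
/-!
Words over disjoint alphabets cannot cancel, so the reduced word of `u * v` is the
concatenation of those of `u` and `v` and `|u v| = |u| + |v|`. Hence `w ↦ exp (-λ |w|)` is
multiplicative on pairs from the two supports, and bilinearity of the product in `ℂ[F(ℕ)]`
turns this into `φ_λ(x y) = φ_λ(x) φ_λ(y)`.
-/

/-- The Haagerup functional `φ_λ` on the group algebra `ℂ[F(ℕ)]`, defined on group
elements by `φ_λ(w) = exp (-λ |w|)` (where `|w|` is the reduced word length) and
extended linearly. -/
noncomputable def haagerupFunctional (l : ℝ) (x : MonoidAlgebra ℂ (FreeGroup ℕ)) : ℂ :=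
  ∑ w ∈ x.coeff.support, x.coeff w * (Real.exp (-l * (FreeGroup.norm w : ℝ)) : ℂ)

namespace FreeGroup

variable {α : Type*}

theorem IsReduced.append {L₁ L₂ : List (α × Bool)} (h₁ : IsReduced L₁) (h₂ : IsReduced L₂)
    (h : ∀ a ∈ L₁.getLast?, ∀ b ∈ L₂.head?, a.1 = b.1 → a.2 = b.2) :
    IsReduced (L₁ ++ L₂) :=
  List.isChain_append.mpr ⟨h₁, h₂, h⟩

variable [DecidableEq α]

theorem toWord_mul_of_disjoint {x y : FreeGroup α}
    (h : ∀ a ∈ x.toWord, ∀ b ∈ y.toWord, a.1 ≠ b.1) :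
    (x * y).toWord = x.toWord ++ y.toWord := by
  rw [toWord_mul]
  refine (IsReduced.append isReduced_toWord isReduced_toWord fun a ha b hb hab => ?_).reduce_eq
  exact absurd hab (h a (List.mem_of_mem_getLast? ha) b (List.mem_of_mem_head? hb))

theorem norm_mul_of_disjoint {x y : FreeGroup α}
    (h : ∀ a ∈ x.toWord, ∀ b ∈ y.toWord, a.1 ≠ b.1) :
    norm (x * y) = norm x + norm y := by
  rw [norm, toWord_mul_of_disjoint h, List.length_append, norm, norm]

end FreeGroup

namespace MonoidAlgebra

theorem linearCombination_coeff_mul {k G : Type*} [CommSemiring k] [Mul G] (E : G → k)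
    (x y : MonoidAlgebra k G)
    (h : ∀ u ∈ x.coeff.support, ∀ v ∈ y.coeff.support, E (u * v) = E u * E v) :
    Finsupp.linearCombination k E (x * y).coeff =
      Finsupp.linearCombination k E x.coeff * Finsupp.linearCombination k E y.coeff := by
  rw [mul_def, coeff_finsuppSum, map_finsuppSum]
  simp_rw [coeff_finsuppSum, map_finsuppSum, coeff_single, Finsupp.linearCombination_single]
  rw [Finsupp.linearCombination_apply, Finsupp.linearCombination_apply, Finsupp.sum, Finsupp.sum,
    Finsupp.sum, Finset.sum_mul_sum]
  refine Finset.sum_congr rfl fun u hu => Finset.sum_congr rfl fun v hv => ?_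
  simp only [h u hu v hv, smul_eq_mul]
  ring

end MonoidAlgebra

theorem haagerupFunctional_eq_linearCombination (l : ℝ) (x : MonoidAlgebra ℂ (FreeGroup ℕ)) :
    haagerupFunctional l x =
      Finsupp.linearCombination ℂ (fun w => (Real.exp (-l * w.norm) : ℂ)) x.coeff := by
  simp [haagerupFunctional, Finsupp.linearCombination_apply, Finsupp.sum]

theorem haagerup_product_state_condition_general (l : ℝ)
    (S T : Set ℕ) (hST : Disjoint S T)
    (x y : MonoidAlgebra ℂ (FreeGroup ℕ))
    (hx : ∀ w ∈ x.coeff.support, ∀ p ∈ FreeGroup.toWord w, p.1 ∈ S)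
    (hy : ∀ w ∈ y.coeff.support, ∀ p ∈ FreeGroup.toWord w, p.1 ∈ T) :
    haagerupFunctional l (x * y) = haagerupFunctional l x * haagerupFunctional l y := by
  simp only [haagerupFunctional_eq_linearCombination]
  refine MonoidAlgebra.linearCombination_coeff_mul _ x y fun u hu v hv => ?_
  have hdisj : ∀ a ∈ u.toWord, ∀ b ∈ v.toWord, a.1 ≠ b.1 := fun a ha b hb =>
    hST.ne_of_mem (hx u hu a ha) (hy v hv b hb)
  rw [FreeGroup.norm_mul_of_disjoint hdisj, Nat.cast_add, mul_add, Real.exp_add,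
    Complex.ofReal_mul]

/-- the Haagerup states satisfy the product state condition: if `x` is
supported on words using only generators from `S`, `y` only generators from `T`, and
`S` and `T` are disjoint, then `φ_λ(x·y) = φ_λ(x)·φ_λ(y)`. -/
theorem haagerup_product_state_condition (l : ℝ) (hl : 0 < l)
    (S T : Set ℕ) (hST : Disjoint S T)
    (x y : MonoidAlgebra ℂ (FreeGroup ℕ))
    (hx : ∀ w ∈ x.coeff.support, ∀ p ∈ FreeGroup.toWord w, p.1 ∈ S)
    (hy : ∀ w ∈ y.coeff.support, ∀ p ∈ FreeGroup.toWord w, p.1 ∈ T) :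
    haagerupFunctional l (x * y) = haagerupFunctional l x * haagerupFunctional l y :=
  haagerup_product_state_condition_general l S T hST x y hx hy
end

section
/- Let A be a unital C*-algebra, α a *-automorphism of A, and φ an α-invariant state on A which is weakly clustering, i.e. lim_{n→∞} (1/n) Σ_{k=0}^{n−1} φ(a·α^k(b)) = φ(a)·φ(b) for all a, b ∈ A. Then φ is an extreme point of the convex set of all α-invariant states on A (i.e. φ is ergodic). -/
/-!
If `φ = t • ψ + u • ψ'` with `ψ, ψ'` invariant states and `t > 0`, then `ψ ≤ t⁻¹ φ` on
elements of the form `a* a`. For the Birkhoff sums `Tₙ = ∑_{k<n} αᵏ b` one has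
`ψ (Tₙ - φ (Tₙ)) = n (ψ b - φ b)`, so the Cauchy–Schwarz inequality for `ψ` together with
this domination gives `n² |ψ b - φ b|² ≤ t⁻¹ (φ (Tₙ* Tₙ) - n² |φ b|²)`. Expanding
`T_{n+1} = b + α Tₙ` shows that the increments of `φ (Tₙ* Tₙ)` are
`2 Re ∑_{k ≤ n} φ (b* αᵏ b) - φ (b* b)`; by weak clustering with `a = b*` they grow like
`2 n |φ b|²`, hence `φ (Tₙ* Tₙ) = n² |φ b|² + o(n²)` and `ψ b = φ b`.
-/

open Filter
open scoped ComplexOrder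

variable {A : Type*} [NormedRing A] [StarRing A] [CStarRing A]
  [NormedAlgebra ℂ A] [StarModule ℂ A] [CompleteSpace A]

/-- A state on a unital C*-algebra: a linear functional `ω` with `ω 1 = 1` and
`ω (a* a) ≥ 0` for all `a`. -/
def IsState (ω : A →ₗ[ℂ] ℂ) : Prop :=
  ω 1 = 1 ∧ ∀ a : A, 0 ≤ ω (star a * a)

open Topology ComplexConjugate Asymptotics

/-- A discrete Stolz–Cesàro theorem. -/
lemma tendsto_div_sq_of_tendsto_sub_div {u : ℕ → ℝ} {ℓ : ℝ}
    (h : Tendsto (fun n : ℕ => (u (n + 1) - u n) / (n + 1)) atTop (𝓝 ℓ)) :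
    Tendsto (fun n : ℕ => u n / n ^ 2) atTop (𝓝 (ℓ / 2)) := by
  have hgauss (n : ℕ) : ∑ m ∈ Finset.range n, ((m : ℝ) + 1) = n * (n + 1) / 2 := by
    induction n with
    | zero => simp
    | succ n ih => rw [Finset.sum_range_succ, ih]; push_cast; ring
  have hpow {p : ℕ} (hp : p < 2) : (fun n : ℕ => (n : ℝ) ^ p) =o[atTop] fun n => (n : ℝ) ^ 2 :=
    (isLittleO_pow_pow_atTop_of_lt hp).comp_tendsto tendsto_natCast_atTop_atTop
  have hinc : (fun m : ℕ => u (m + 1) - u m - ℓ * (m + 1)) =o[atTop] fun m => ((m : ℝ) + 1) := by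
    rw [isLittleO_iff_tendsto' (.of_forall fun m hm => absurd hm (by positivity))]
    refine (sub_self ℓ ▸ h.sub_const ℓ).congr fun m => ?_
    field_simp
  have hsum : (fun n : ℕ => ∑ m ∈ Finset.range n, (u (m + 1) - u m - ℓ * (m + 1)))
      =o[atTop] fun n => (n : ℝ) ^ 2 := by
    refine (hinc.sum_range (fun m => by positivity) ?_).trans_isBigO ?_
    · refine tendsto_atTop_mono (fun n => ?_) (tendsto_natCast_atTop_atTop.atTop_div_const two_pos)
      rw [hgauss]
      gcongr
      nlinarith [n.cast_nonneg (α := ℝ)]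
    · refine IsBigO.of_bound 1 ((eventually_ge_atTop 1).mono fun n hn => ?_)
      have hn' : (1 : ℝ) ≤ n := by exact_mod_cast hn
      rw [hgauss, Real.norm_of_nonneg (by positivity), Real.norm_of_nonneg (by positivity)]
      nlinarith
  have hlin : (fun n : ℕ => u 0 + ℓ / 2 * n) =o[atTop] fun n => (n : ℝ) ^ 2 :=
    (((hpow two_pos).const_mul_left (u 0)).add
      ((hpow one_lt_two).const_mul_left (ℓ / 2))).congr_left fun n => by simp
  have hrem : (fun n : ℕ => u n - ℓ / 2 * n ^ 2) =o[atTop] fun n => (n : ℝ) ^ 2 := by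
    refine (hsum.add hlin).congr_left fun n => ?_
    rw [Finset.sum_sub_distrib, Finset.sum_range_sub, ← Finset.mul_sum, hgauss]
    ring
  refine (zero_add (ℓ / 2) ▸ hrem.tendsto_div_nhds_zero.add_const (ℓ / 2)).congr' ?_
  filter_upwards [eventually_ne_atTop 0] with n hn
  field_simp
  ring

section PositiveFunctional

variable {B : Type*} [Ring B] [StarRing B] [Algebra ℂ B] {φ : B →ₗ[ℂ] ℂ} {α : B →⋆ₐ[ℂ] B}

lemma im_map_star_mul_self (hφ : ∀ a, 0 ≤ φ (star a * a)) (a : B) :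
    (φ (star a * a)).im = 0 :=
  ((Complex.nonneg_iff.mp (hφ a)).2).symm

lemma map_birkhoffSum_id_of_invariant (hinv : ∀ a, φ (α a) = φ a) (n : ℕ) (b : B) :
    φ (birkhoffSum α id n b) = n * φ b := by
  rw [map_birkhoffSum, Function.comp_id, birkhoffSum_of_comp_eq (funext hinv), Pi.smul_apply,
    nsmul_eq_mul]

lemma birkhoffSum_id_succ (n : ℕ) (b : B) :
    birkhoffSum α id (n + 1) b = b + α (birkhoffSum α id n b) := by
  rw [birkhoffSum_succ', map_birkhoffSum]
  simp only [birkhoffSum, id, Function.comp, ← Function.iterate_succ_apply' α,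
    Function.iterate_succ_apply]

lemma map_mul_birkhoffSum_id (a : B) (n : ℕ) (b : B) :
    φ (a * birkhoffSum α id n b) = birkhoffSum α (fun x => φ (a * x)) n b := by
  simp only [birkhoffSum, id, Finset.mul_sum, map_sum]

variable [StarModule ℂ B]

lemma map_star_of_nonneg (hφ : ∀ a, 0 ≤ φ (star a * a)) (a : B) :
    φ (star a) = conj (φ a) := by
  have e₁ : star (1 + a) * (1 + a) = star 1 * 1 + star a * a + (a + star a) := by
    simp only [star_add, star_one]; noncomm_ring
  have eI : star (1 + Complex.I • a) * (1 + Complex.I • a)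
      = star 1 * 1 + star a * a + Complex.I • (a - star a) := by
    simp only [star_add, star_one, star_smul, Complex.star_def, Complex.conj_I, add_mul, mul_add,
      one_mul, mul_one, smul_mul_assoc, mul_smul_comm]
    match_scalars <;> simp [← sq]
  have h₁ := im_map_star_mul_self hφ (1 + a)
  have hI := im_map_star_mul_self hφ (1 + Complex.I • a)
  rw [e₁, map_add, map_add, Complex.add_im, Complex.add_im, im_map_star_mul_self hφ,
    im_map_star_mul_self hφ, map_add, Complex.add_im] at h₁
  rw [eI, map_add, map_add, Complex.add_im, Complex.add_im, im_map_star_mul_self hφ,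
    im_map_star_mul_self hφ, map_smul, map_sub, smul_eq_mul, Complex.mul_im, Complex.I_re,
    Complex.I_im, Complex.sub_re] at hI
  apply Complex.ext <;> simp only [Complex.conj_re, Complex.conj_im] <;> linarith

lemma normSq_le_of_nonneg (hφ : ∀ a, 0 ≤ φ (star a * a)) (a : B) :
    Complex.normSq (φ a) ≤ (φ 1).re * (φ (star a * a)).re := by
  let _ : PreInnerProductSpace.Core ℂ B :=
    { inner x y := φ (star x * y)
      conj_inner_symm x y := by rw [← map_star_of_nonneg hφ, star_mul, star_star]
      re_inner_nonneg x := (Complex.nonneg_iff.mp (hφ x)).1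
      add_left x y z := by rw [star_add, add_mul, map_add]
      smul_left x y r := by
        rw [star_smul, smul_mul_assoc, map_smul, smul_eq_mul, Complex.star_def] }
  have h := InnerProductSpace.Core.inner_mul_inner_self_le (𝕜 := ℂ) (1 : B) a
  change ‖φ (star 1 * a)‖ * ‖φ (star a * 1)‖ ≤ (φ (star 1 * 1)).re * (φ (star a * a)).re at h
  rwa [star_one, one_mul, mul_one, one_mul, map_star_of_nonneg hφ, Complex.norm_conj, ← sq,
    ← Complex.normSq_eq_norm_sq] at h

lemma map_star_sub_mul_sub_of_map_one (hφ : ∀ a, 0 ≤ φ (star a * a)) (h1 : φ 1 = 1) (x : B) :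
    φ (star (x - φ x • 1) * (x - φ x • 1)) = φ (star x * x) - Complex.normSq (φ x) := by
  have e : star (x - φ x • 1) * (x - φ x • 1)
      = star x * x - φ x • star x - conj (φ x) • x + (conj (φ x) * φ x) • 1 := by
    simp only [star_sub, star_smul, star_one, Complex.star_def, sub_mul, mul_sub, smul_mul_assoc,
      mul_smul_comm, one_mul, mul_one]
    module
  rw [e, map_add, map_sub, map_sub, map_smul, map_smul, map_smul, map_star_of_nonneg hφ, h1,
    ← Complex.mul_conj]
  simp only [smul_eq_mul]
  ring

lemma re_map_star_birkhoffSum_mul_self_succ (hφ : ∀ a, 0 ≤ φ (star a * a))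
    (hinv : ∀ a, φ (α a) = φ a) (n : ℕ) (b : B) :
    (φ (star (birkhoffSum α id (n + 1) b) * birkhoffSum α id (n + 1) b)).re
      = (φ (star (birkhoffSum α id n b) * birkhoffSum α id n b)).re
        + 2 * (birkhoffSum α (fun x => φ (star b * x)) (n + 1) b).re - (φ (star b * b)).re := by
  set T := birkhoffSum α id n b
  have e : star (b + α T) * (b + α T)
      = star b * b + star b * α T + star (star b * α T) + α (star T * T) := by
    simp only [star_add, star_mul, star_star, map_mul, map_star, add_mul, mul_add]
    abel
  rw [← map_mul_birkhoffSum_id, birkhoffSum_id_succ, e, mul_add, map_add, map_add, map_add,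
    map_star_of_nonneg hφ, hinv]
  simp only [Complex.add_re, Complex.conj_re]
  ring

lemma tendsto_re_map_star_birkhoffSum_mul_self_div_sq (hφ : ∀ a, 0 ≤ φ (star a * a))
    (hinv : ∀ a, φ (α a) = φ a) (b : B)
    (hwc : Tendsto (fun n => birkhoffAverage ℂ α (fun x => φ (star b * x)) n b) atTop
      (𝓝 (φ (star b) * φ b))) :
    Tendsto (fun n : ℕ => (φ (star (birkhoffSum α id n b) * birkhoffSum α id n b)).re / n ^ 2)
      atTop (𝓝 (Complex.normSq (φ b))) := by
  have hL : (φ (star b) * φ b).re = Complex.normSq (φ b) := by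
    rw [map_star_of_nonneg hφ, mul_comm, Complex.mul_conj, Complex.ofReal_re]
  have hre := ((Complex.continuous_re.tendsto _).comp hwc).comp (tendsto_add_atTop_nat 1)
  rw [hL] at hre
  have hinc := (hre.const_mul 2).sub
    (tendsto_one_div_add_atTop_nhds_zero_nat.const_mul (φ (star b * b)).re)
  rw [mul_zero, sub_zero] at hinc
  convert tendsto_div_sq_of_tendsto_sub_div (hinc.congr fun n => ?_) using 2
  · ring
  have hcast : ((n + 1 : ℕ) : ℂ) = ((n + 1 : ℝ) : ℂ) := by norm_cast
  simp only [Function.comp, birkhoffAverage, smul_eq_mul, hcast, ← Complex.ofReal_inv,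
    Complex.re_ofReal_mul, re_map_star_birkhoffSum_mul_self_succ hφ hinv]
  ring

lemma eq_of_dominated_of_clustering (hφ : ∀ a, 0 ≤ φ (star a * a)) (hφ1 : φ 1 = 1)
    (hinv : ∀ a, φ (α a) = φ a)
    (hwc : ∀ b, Tendsto (fun n => birkhoffAverage ℂ α (fun x => φ (star b * x)) n b) atTop
      (𝓝 (φ (star b) * φ b)))
    {ψ : B →ₗ[ℂ] ℂ} (hψ : ∀ a, 0 ≤ ψ (star a * a)) (hψ1 : ψ 1 = 1) (hψinv : ∀ a, ψ (α a) = ψ a)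
    {C : ℝ} (hle : ∀ a, (ψ (star a * a)).re ≤ C * (φ (star a * a)).re) :
    ψ = φ := by
  ext b
  set T := fun n => birkhoffSum α id n b
  set x := fun n => T n - φ (T n) • 1
  have hψx (n : ℕ) : ψ (x n) = n * (ψ b - φ b) := by
    simp only [x, T, map_sub, map_smul, hψ1, map_birkhoffSum_id_of_invariant hψinv,
      map_birkhoffSum_id_of_invariant hinv, smul_eq_mul, mul_one, mul_sub]
  have hφx (n : ℕ) : (φ (star (x n) * x n)).re
      = (φ (star (T n) * T n)).re - n ^ 2 * Complex.normSq (φ b) := by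
    simp only [x]
    rw [map_star_sub_mul_sub_of_map_one hφ hφ1, Complex.sub_re, Complex.ofReal_re,
      map_birkhoffSum_id_of_invariant hinv, Complex.normSq_mul, Complex.normSq_natCast, sq]
  have hbound : ∀ᶠ n : ℕ in atTop, Complex.normSq (ψ b - φ b)
      ≤ C * ((φ (star (T n) * T n)).re / n ^ 2 - Complex.normSq (φ b)) := by
    filter_upwards [eventually_ne_atTop 0] with n hn
    have h := (normSq_le_of_nonneg hψ (x n)).trans_eq (by rw [hψ1, Complex.one_re, one_mul])
    rw [hψx, Complex.normSq_mul, Complex.normSq_natCast] at h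
    have hn2 : (0 : ℝ) < n ^ 2 := by positivity
    calc Complex.normSq (ψ b - φ b) = n * n * Complex.normSq (ψ b - φ b) / n ^ 2 := by
          field_simp
      _ ≤ C * (φ (star (x n) * x n)).re / n ^ 2 :=
          div_le_div_of_nonneg_right (h.trans (hle _)) hn2.le
      _ = _ := by rw [hφx]; field_simp
  have hlim := ((tendsto_re_map_star_birkhoffSum_mul_self_div_sq hφ hinv b (hwc b)).sub_const
    (Complex.normSq (φ b))).const_mul C
  rw [sub_self, mul_zero] at hlim
  exact sub_eq_zero.mp (Complex.normSq_eq_zero.mp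
    ((ge_of_tendsto hlim hbound).antisymm (Complex.normSq_nonneg _)))

end PositiveFunctional

/-- a weakly clustering `α`-invariant state is an extreme point of the
convex set of `α`-invariant states (i.e. it is ergodic). -/
theorem weaklyClustering_implies_ergodic (α : A ≃⋆ₐ[ℂ] A)
    (φ : A →ₗ[ℂ] ℂ) (hstate : IsState φ) (hinv : ∀ a : A, φ (α a) = φ a)
    (hwc : ∀ a b : A,
      Tendsto (fun n : ℕ => (n : ℂ)⁻¹ * ∑ k ∈ Finset.range n, φ (a * (⇑α)^[k] b))
        atTop (nhds (φ a * φ b))) :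
    φ ∈ Set.extremePoints ℝ
      {ψ : A →ₗ[ℂ] ℂ | IsState ψ ∧ ∀ a : A, ψ (α a) = ψ a} := by
  refine ⟨⟨hstate, hinv⟩, fun ψ ⟨⟨hψ1, hψ⟩, hψinv⟩ ψ' ⟨⟨_, hψ'⟩, _⟩ ⟨t, u, ht, hu, _, hsum⟩ => ?_⟩
  refine eq_of_dominated_of_clustering (α := (α : A →⋆ₐ[ℂ] A)) hstate.2 hstate.1 hinv
    (fun b => hwc (star b) b) hψ hψ1 hψinv (C := t⁻¹) fun a => ?_
  have h := congrArg (fun f : A →ₗ[ℂ] ℂ => (f (star a * a)).re) hsum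
  simp only [LinearMap.add_apply, LinearMap.smul_apply, Complex.add_re, Complex.real_smul,
    Complex.re_ofReal_mul] at h
  rw [le_inv_mul_iff₀ ht]
  nlinarith [(Complex.nonneg_iff.mp (hψ' a)).1]
end

section
/- Let H be a complex Hilbert space, A a unital *-subalgebra of B(H), Ω ∈ H a unit vector which is cyclic for A (i.e. {aΩ : a ∈ A} is dense in H), and U a unitary operator on H with UΩ = Ω and U a U* ∈ A for every a ∈ A. Then the following are equivalent: (i) [weak clustering] for all a, b ∈ A, lim_{n→∞} (1/n) Σ_{k=0}^{n−1} ⟨a U^k b Ω, Ω⟩ = ⟨aΩ, Ω⟩·⟨bΩ, Ω⟩; (ii) every vector ξ ∈ H with Uξ = ξ is a scalar multiple of Ω. -/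
/-!
By the mean ergodic theorem the Cesàro means of `U ^ k` converge strongly to the orthogonal
projection `P` onto the fixed space of `U`, so the limit in weak clustering exists and equals
`⟪a⋆ Ω, P (b Ω)⟫`, while the prescribed value is `⟪a⋆ Ω, Q (b Ω)⟫` with `Q` the projection onto
`ℂ ∙ Ω`. As `S` is `⋆`-closed and `S Ω` is dense, weak clustering says exactly `P = Q`, i.e. the
fixed space is `ℂ ∙ Ω`.
-/

open Filter ContinuousLinearMap
open scoped InnerProductSpace Topology

namespace ContinuousLinearMap

variable {𝕜 E : Type*} [RCLike 𝕜] [NormedAddCommGroup E] [InnerProductSpace 𝕜 E]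

theorem norm_le_one_of_adjoint_mul_self_eq_one [CompleteSpace E] {U : E →L[𝕜] E}
    (hU : adjoint U * U = 1) : ‖U‖ ≤ 1 := by
  have h : ‖U‖ * ‖U‖ ≤ 1 := by
    rw [← norm_adjoint_comp_self]
    exact (congrArg norm hU).trans_le norm_id_le
  nlinarith [norm_nonneg U]

theorem tendsto_cesaro_inner_pow_apply [CompleteSpace E] (U : E →L[𝕜] E) (hU : ‖U‖ ≤ 1)
    (x y : E) :
    Tendsto (fun n : ℕ => (n : 𝕜)⁻¹ * ∑ k ∈ Finset.range n, ⟪x, (U ^ k) y⟫_𝕜) atTop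
      (𝓝 ⟪x, (U.eqLocus (1 : E →L[𝕜] E)).starProjection y⟫_𝕜) := by
  have := (tendsto_const_nhds (x := x)).inner (𝕜 := 𝕜)
    (U.tendsto_birkhoffAverage_orthogonalProjection hU y)
  rw [Submodule.starProjection_apply]
  simpa [birkhoffAverage, birkhoffSum, inner_smul_right, inner_sum] using this

theorem ext_of_dense_inner {D : Set E} (hD : Dense D) {T₁ T₂ : E →L[𝕜] E}
    (h : ∀ x ∈ D, ∀ y ∈ D, ⟪x, T₁ y⟫_𝕜 = ⟪x, T₂ y⟫_𝕜) : T₁ = T₂ :=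
  DFunLike.coe_injective <| T₁.continuous.ext_on hD T₂.continuous fun y hy =>
    hD.eq_of_inner_right 𝕜 fun x hx => h x hx y hy

end ContinuousLinearMap

theorem weakClustering_iff_fixedVectors_trivial_general
    {H : Type*} [NormedAddCommGroup H] [InnerProductSpace ℂ H] [CompleteSpace H]
    (S : StarSubalgebra ℂ (H →L[ℂ] H)) (Ω : H) (hΩ : ‖Ω‖ = 1)
    (hcyc : Dense ((fun T : H →L[ℂ] H => T Ω) '' (S : Set (H →L[ℂ] H))))
    (U : H →L[ℂ] H)
    (hU : U * adjoint U = 1 ∧ adjoint U * U = 1)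
    (hUΩ : U Ω = Ω) :
    (∀ a ∈ S, ∀ b ∈ S,
        Tendsto (fun n : ℕ => (n : ℂ)⁻¹ *
            ∑ k ∈ Finset.range n, (inner ℂ Ω ((a * U ^ k * b) Ω) : ℂ))
          atTop (nhds ((inner ℂ Ω (a Ω) : ℂ) * inner ℂ Ω (b Ω))))
      ↔
    (∀ ξ : H, U ξ = ξ → ∃ c : ℂ, ξ = c • Ω) := by
  set K := U.eqLocus (1 : H →L[ℂ] H)
  have hΩK : Ω ∈ K := hUΩ
  have hlim (a b : H →L[ℂ] H) : Tendsto (fun n : ℕ => (n : ℂ)⁻¹ *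
      ∑ k ∈ Finset.range n, ⟪Ω, (a * U ^ k * b) Ω⟫_ℂ) atTop
      (𝓝 ⟪(star a) Ω, K.starProjection (b Ω)⟫_ℂ) := by
    simpa only [star_eq_adjoint, adjoint_inner_left, mul_apply_eq_comp] using
      U.tendsto_cesaro_inner_pow_apply (norm_le_one_of_adjoint_mul_self_eq_one hU.2)
        ((star a) Ω) (b Ω)
  have hprod (a b : H →L[ℂ] H) :
      ⟪Ω, a Ω⟫_ℂ * ⟪Ω, b Ω⟫_ℂ = ⟪(star a) Ω, (ℂ ∙ Ω).starProjection (b Ω)⟫_ℂ := by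
    rw [Submodule.starProjection_unit_singleton ℂ hΩ, inner_smul_right, star_eq_adjoint,
      adjoint_inner_left, mul_comm]
  calc _ ↔ ∀ a ∈ S, ∀ b ∈ S, ⟪(star a) Ω, K.starProjection (b Ω)⟫_ℂ =
          ⟪(star a) Ω, (ℂ ∙ Ω).starProjection (b Ω)⟫_ℂ := by
        simp only [hprod]
        exact forall₂_congr fun a _ => forall₂_congr fun b _ =>
          ⟨(tendsto_nhds_unique (hlim a b) ·), (· ▸ hlim a b)⟩
    _ ↔ ∀ a ∈ S, ∀ b ∈ S, ⟪a Ω, K.starProjection (b Ω)⟫_ℂ =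
          ⟪a Ω, (ℂ ∙ Ω).starProjection (b Ω)⟫_ℂ :=
        ⟨fun h a ha => by simpa using h (star a) (star_mem ha), fun h a ha => h _ (star_mem ha)⟩
    _ ↔ K.starProjection = (ℂ ∙ Ω).starProjection := by
        refine ⟨fun h => ext_of_dense_inner hcyc ?_, fun h => by simp [h]⟩
        simpa only [Set.forall_mem_image, SetLike.mem_coe] using h
    _ ↔ K = ℂ ∙ Ω := Submodule.starProjection_inj
    _ ↔ K ≤ ℂ ∙ Ω :=
        ⟨le_of_eq, fun h => h.antisymm ((Submodule.span_singleton_le_iff_mem _ _).2 hΩK)⟩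
    _ ↔ _ := by simp [SetLike.le_def, K, Submodule.mem_span_singleton, eq_comm]

/-- for a unital *-subalgebra `S ⊆ B(H)` with cyclic unit vector `Ω` and
a unitary `U` with `UΩ = Ω` and `U S U* ⊆ S`, weak clustering is equivalent to the
`U`-fixed vectors being the scalar multiples of `Ω`. -/
theorem weakClustering_iff_fixedVectors_trivial
    {H : Type*} [NormedAddCommGroup H] [InnerProductSpace ℂ H] [CompleteSpace H]
    (S : StarSubalgebra ℂ (H →L[ℂ] H)) (Ω : H) (hΩ : ‖Ω‖ = 1)
    (hcyc : Dense ((fun T : H →L[ℂ] H => T Ω) '' (S : Set (H →L[ℂ] H))))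
    (U : H →L[ℂ] H)
    (hU : U * adjoint U = 1 ∧ adjoint U * U = 1)
    (hUΩ : U Ω = Ω)
    (hUS : ∀ a ∈ S, U * a * adjoint U ∈ S) :
    (∀ a ∈ S, ∀ b ∈ S,
        Tendsto (fun n : ℕ => (n : ℂ)⁻¹ *
            ∑ k ∈ Finset.range n, (inner ℂ Ω ((a * U ^ k * b) Ω) : ℂ))
          atTop (nhds ((inner ℂ Ω (a Ω) : ℂ) * inner ℂ Ω (b Ω))))
      ↔
    (∀ ξ : H, U ξ = ξ → ∃ c : ℂ, ξ = c • Ω) :=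
  weakClustering_iff_fixedVectors_trivial_general S Ω hΩ hcyc U hU hUΩ
end

section
/- Let H be a complex Hilbert space, A a unital *-subalgebra of B(H), Ω ∈ H a unit vector which is cyclic for A (i.e. {aΩ : a ∈ A} is dense in H), and U a unitary operator on H with UΩ = Ω and U a U* ∈ A for every a ∈ A. Assume that every x ∈ B(H) which commutes with every bounded operator commuting with all elements of A (i.e. x lies in the double commutant of A) and which commutes with U is a scalar multiple of the identity. Then the system converges to equilibrium: for all a, b, c ∈ A, lim_{n→∞} (1/n) Σ_{k=0}^{n−1} ⟨a (U^k b U^{−k}) c Ω, Ω⟩ = ⟨a c Ω, Ω⟩·⟨bΩ, Ω⟩. -/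
/-!
The Cesàro averages `xₙ = n⁻¹ ∑_{k<n} Uᵏ b U⁻ᵏ` are bounded by `‖b‖`, so along every ultrafilter
they have a weak-operator limit `T`. Each `xₙ` commutes with the commutant of `S`, and
`U xₙ - xₙ U = n⁻¹ (Uⁿ b U⁻ⁿ - b) U` tends to zero, so `T` lies in the double commutant and commutes
with `U`: it is a scalar, and the scalar is `⟪Ω, b Ω⟫` because `⟪Ω, xₙ Ω⟫ = ⟪Ω, b Ω⟫`. Hence
`xₙ → ⟪Ω, b Ω⟫ • 1` weakly, and the averaged correlations are `⟪a⋆ Ω, xₙ (c Ω)⟫`.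
-/

open Filter ContinuousLinearMap
open Topology Finset
open scoped InnerProductSpace
open ContinuousLinearMapWOT (ofCLM tendsto_iff_forall_inner_apply_tendsto)

theorem Ultrafilter.exists_tendsto_of_norm_le {ι X : Type*} [SeminormedAddCommGroup X]
    [ProperSpace X] (𝔘 : Ultrafilter ι) {f : ι → X} {C : ℝ} (hf : ∀ i, ‖f i‖ ≤ C) :
    ∃ z, Tendsto f 𝔘 (𝓝 z) := by
  obtain ⟨z, -, hz⟩ := (isCompact_closedBall (0 : X) C).ultrafilter_le_nhds' (𝔘.map f)
    (Ultrafilter.mem_map.2 (univ_mem' fun i => mem_closedBall_zero_iff.2 (hf i)))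
  exact ⟨z, hz⟩

section WeakOperatorLimits

variable {ι 𝕜 E : Type*} [RCLike 𝕜] [NormedAddCommGroup E] [InnerProductSpace 𝕜 E]
  [CompleteSpace E]

/-- The weak limit is the operator that the Riesz representation attaches to the
ultrafilter limit of the sesquilinear forms `(ξ, η) ↦ ⟪ξ, x i η⟫`. -/
theorem exists_tendsto_ofCLM_of_norm_le (𝔘 : Ultrafilter ι) {x : ι → E →L[𝕜] E} {M : ℝ}
    (hM : ∀ i, ‖x i‖ ≤ M) : ∃ T : E →L[𝕜] E, Tendsto (fun i => ofCLM (x i)) 𝔘 (𝓝 (ofCLM T)) := by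
  have hbound : ∀ ξ η i, ‖⟪ξ, x i η⟫_𝕜‖ ≤ M * ‖ξ‖ * ‖η‖ := fun ξ η i =>
    calc ‖⟪ξ, x i η⟫_𝕜‖ ≤ ‖ξ‖ * ‖x i η‖ := norm_inner_le_norm _ _
      _ ≤ ‖ξ‖ * (M * ‖η‖) := by gcongr; exact (x i).le_of_opNorm_le (hM i) η
      _ = M * ‖ξ‖ * ‖η‖ := by ring
  set β : E → E → 𝕜 := fun ξ η => limUnder (𝔘 : Filter ι) fun i => ⟪ξ, x i η⟫_𝕜
  have hβ : ∀ ξ η, Tendsto (fun i => ⟪ξ, x i η⟫_𝕜) 𝔘 (𝓝 (β ξ η)) := fun ξ η =>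
    tendsto_nhds_limUnder (𝔘.exists_tendsto_of_norm_le (hbound ξ η))
  have hβ_eq : ∀ {ξ η z}, Tendsto (fun i => ⟪ξ, x i η⟫_𝕜) 𝔘 (𝓝 z) → β ξ η = z :=
    fun h => tendsto_nhds_unique (hβ _ _) h
  let B : E →ₗ⋆[𝕜] E →ₗ[𝕜] 𝕜 := LinearMap.mk₂'ₛₗ (starRingEnd 𝕜) (RingHom.id 𝕜) β
    (fun ξ₁ ξ₂ η => hβ_eq <| by simpa only [inner_add_left] using (hβ ξ₁ η).add (hβ ξ₂ η))
    (fun c ξ η => hβ_eq <| by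
      simpa only [inner_smul_left, smul_eq_mul] using (hβ ξ η).const_mul (starRingEnd 𝕜 c))
    (fun ξ η₁ η₂ => hβ_eq <| by
      simpa only [map_add, inner_add_right] using (hβ ξ η₁).add (hβ ξ η₂))
    (fun c ξ η => hβ_eq <| by
      simpa only [map_smul, inner_smul_right, smul_eq_mul, RingHom.id_apply] using
        (hβ ξ η).const_mul c)
  let Bc : E →L⋆[𝕜] E →L[𝕜] 𝕜 := B.mkContinuous₂ M fun ξ η =>
    le_of_tendsto (hβ ξ η).norm (Eventually.of_forall (hbound ξ η))
  refine ⟨adjoint (InnerProductSpace.continuousLinearMapOfBilin Bc),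
    tendsto_iff_forall_inner_apply_tendsto.2 fun η ξ => ?_⟩
  simp only [ContinuousLinearMapWOT.ofCLM_apply, adjoint_inner_right,
    InnerProductSpace.continuousLinearMapOfBilin_apply]
  exact hβ ξ η

theorem tendsto_ofCLM_of_forall_ultrafilter {l : Filter ι} {x : ι → E →L[𝕜] E} {M : ℝ}
    (hM : ∀ i, ‖x i‖ ≤ M) {T₀ : E →L[𝕜] E}
    (hT₀ : ∀ 𝔘 : Ultrafilter ι, ↑𝔘 ≤ l → ∀ T : E →L[𝕜] E,
      Tendsto (fun i => ofCLM (x i)) 𝔘 (𝓝 (ofCLM T)) → T = T₀) :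
    Tendsto (fun i => ofCLM (x i)) l (𝓝 (ofCLM T₀)) := by
  refine (tendsto_iff_ultrafilter _ _ _).2 fun 𝔘 h𝔘 => ?_
  obtain ⟨T, hT⟩ := exists_tendsto_ofCLM_of_norm_le 𝔘 hM
  exact hT₀ 𝔘 h𝔘 T hT ▸ hT

theorem commute_of_tendsto_ofCLM {l : Filter ι} [l.NeBot] {x : ι → E →L[𝕜] E}
    {T y : E →L[𝕜] E} (hT : Tendsto (fun i => ofCLM (x i)) l (𝓝 (ofCLM T)))
    (hxy : Tendsto (fun i => y * x i - x i * y) l (𝓝 0)) : Commute T y := by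
  rw [tendsto_iff_forall_inner_apply_tendsto] at hT
  change T * y = y * T
  ext η
  refine ext_inner_left 𝕜 fun ξ => (sub_eq_zero.1 ?_).symm
  have hlim : Tendsto (fun i => ⟪ξ, (y * x i - x i * y) η⟫_𝕜) l
      (𝓝 (⟪ξ, (y * T) η⟫_𝕜 - ⟪ξ, (T * y) η⟫_𝕜)) := by
    simpa only [sub_apply, mul_apply_eq_comp, inner_sub_right, adjoint_inner_left,
      ContinuousLinearMapWOT.ofCLM_apply] using (hT η (adjoint y ξ)).sub (hT (y η) ξ)
  have hzero : Tendsto (fun i => ⟪ξ, (y * x i - x i * y) η⟫_𝕜) l (𝓝 0) := by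
    simpa using tendsto_const_nhds.inner (((apply 𝕜 E η).continuous.tendsto 0).comp hxy)
  exact tendsto_nhds_unique hlim hzero

theorem commute_of_tendsto_ofCLM_of_forall_commute {l : Filter ι} [l.NeBot]
    {x : ι → E →L[𝕜] E} {T y : E →L[𝕜] E} (hT : Tendsto (fun i => ofCLM (x i)) l (𝓝 (ofCLM T)))
    (hxy : ∀ i, Commute (x i) y) : Commute T y :=
  commute_of_tendsto_ofCLM hT <|
    tendsto_const_nhds.congr fun i => (sub_eq_zero.2 (hxy i).eq.symm).symm

end WeakOperatorLimits

section ConjugationAverages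

variable {A : Type*}

theorem pow_mul_mul_star_pow_mem [Monoid A] [Star A] {S : Set A} {u : A}
    (hS : ∀ a ∈ S, u * a * star u ∈ S) {b : A} (hb : b ∈ S) (k : ℕ) :
    u ^ k * b * star u ^ k ∈ S := by
  induction k with
  | zero => simpa using hb
  | succ k ih =>
    rw [pow_succ' u, pow_succ (star u)]
    simpa only [mul_assoc] using hS _ ih

section Algebra

variable (𝕜 : Type*) [Field 𝕜] [Ring A] [Star A] [Algebra 𝕜 A]

def conjAverage (u b : A) (n : ℕ) : A :=
  (n : 𝕜)⁻¹ • ∑ k ∈ range n, u ^ k * b * star u ^ k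

variable {𝕜}

theorem Commute.conjAverage_left {u b y : A} (h : ∀ k, Commute (u ^ k * b * star u ^ k) y)
    (n : ℕ) : Commute (conjAverage 𝕜 u b n) y :=
  (Commute.sum_left _ _ _ fun k _ => h k).smul_left _

theorem mul_conjAverage_sub_conjAverage_mul {u : A} (hu : star u * u = 1) (b : A) (n : ℕ) :
    u * conjAverage 𝕜 u b n - conjAverage 𝕜 u b n * u =
      (n : 𝕜)⁻¹ • ((u ^ n * b * star u ^ n - b) * u) := by
  set c : ℕ → A := fun k => u ^ k * b * star u ^ k
  have hshift : ∀ k, u * c k = c (k + 1) * u := fun k => by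
    simp only [c, pow_succ' u, pow_succ (star u), mul_assoc, hu, mul_one]
  have htelescope : u * ∑ k ∈ range n, c k - (∑ k ∈ range n, c k) * u = (c n - c 0) * u := by
    rw [mul_sum, sum_mul, ← sum_sub_distrib]
    simp only [hshift, ← sub_mul]
    rw [← sum_mul, sum_range_sub]
  rw [conjAverage, mul_smul_comm, smul_mul_assoc, ← smul_sub, htelescope]
  simp [c]

end Algebra

variable {𝕜 : Type*} [RCLike 𝕜] [NormedRing A] [StarRing A] [CStarRing A] [NormedAlgebra 𝕜 A]

theorem norm_pow_mul_mul_star_pow {u : A} (hu : u ∈ unitary A) (b : A) (k : ℕ) :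
    ‖u ^ k * b * star u ^ k‖ = ‖b‖ := by
  rw [CStarRing.norm_mul_mem_unitary _ (pow_mem (Unitary.star_mem hu) k),
    CStarRing.norm_mem_unitary_mul _ (pow_mem hu k)]

theorem norm_conjAverage_le {u : A} (hu : u ∈ unitary A) (b : A) (n : ℕ) :
    ‖conjAverage 𝕜 u b n‖ ≤ ‖b‖ := by
  rcases n.eq_zero_or_pos with rfl | hn
  · simp [conjAverage]
  calc ‖conjAverage 𝕜 u b n‖ = (n : ℝ)⁻¹ * ‖∑ k ∈ range n, u ^ k * b * star u ^ k‖ := by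
        rw [conjAverage, norm_smul, norm_inv, RCLike.norm_natCast]
    _ ≤ (n : ℝ)⁻¹ * (n * ‖b‖) := by
        gcongr
        exact (norm_sum_le _ _).trans (by simp [norm_pow_mul_mul_star_pow hu])
    _ = ‖b‖ := by field_simp

theorem tendsto_mul_conjAverage_sub_conjAverage_mul {u : A} (hu : u ∈ unitary A) (b : A) :
    Tendsto (fun n => u * conjAverage 𝕜 u b n - conjAverage 𝕜 u b n * u) atTop (𝓝 0) := by
  simp_rw [mul_conjAverage_sub_conjAverage_mul (Unitary.star_mul_self_of_mem hu)]
  refine tendsto_inv_atTop_nhds_zero_nat.zero_smul_isBoundedUnder_le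
    (isBoundedUnder_of ⟨2 * ‖b‖, fun n => ?_⟩)
  calc ‖(u ^ n * b * star u ^ n - b) * u‖ = ‖u ^ n * b * star u ^ n - b‖ :=
        CStarRing.norm_mul_mem_unitary _ hu
    _ ≤ ‖u ^ n * b * star u ^ n‖ + ‖b‖ := norm_sub_le _ _
    _ = 2 * ‖b‖ := by rw [norm_pow_mul_mul_star_pow hu]; ring

end ConjugationAverages

theorem inner_conjAverage_apply_self {𝕜 E : Type*} [RCLike 𝕜] [NormedAddCommGroup E]
    [InnerProductSpace 𝕜 E] [CompleteSpace E] {U : E →L[𝕜] E} (hU : star U * U = 1) {Ω : E}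
    (hUΩ : U Ω = Ω) (b : E →L[𝕜] E) {n : ℕ} (hn : n ≠ 0) :
    ⟪Ω, conjAverage 𝕜 U b n Ω⟫_𝕜 = ⟪Ω, b Ω⟫_𝕜 := by
  have hfix : Function.IsFixedPt ⇑(star U) Ω :=
    calc star U Ω = (star U * U) Ω := by rw [mul_apply_eq_comp, hUΩ]
      _ = Ω := by rw [hU, one_apply_eq_self]
  have hpow : ∀ k, (star U ^ k) Ω = Ω := fun k => by
    rw [pow_apply_eq_iterate]; exact hfix.iterate k
  have hconj : ∀ k, ⟪Ω, (U ^ k * b * star U ^ k) Ω⟫_𝕜 = ⟪Ω, b Ω⟫_𝕜 := fun k => by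
    rw [mul_apply_eq_comp, mul_apply_eq_comp, hpow, ← adjoint_inner_left, ← star_eq_adjoint,
      star_pow, hpow]
  simp only [conjAverage, smul_apply, _root_.sum_apply, inner_smul_right, inner_sum,
    hconj, sum_const, card_range, nsmul_eq_mul]
  field_simp

theorem tendsto_ofCLM_conjAverage {𝕜 E : Type*} [RCLike 𝕜] [NormedAddCommGroup E]
    [InnerProductSpace 𝕜 E] [CompleteSpace E] {S : Set (E →L[𝕜] E)} {U : E →L[𝕜] E}
    (hU : U ∈ unitary (E →L[𝕜] E)) (hUS : ∀ a ∈ S, U * a * star U ∈ S) {Ω : E} (hΩ : ‖Ω‖ = 1)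
    (hUΩ : U Ω = Ω)
    (htriv : ∀ x : E →L[𝕜] E, (∀ y : E →L[𝕜] E, (∀ a ∈ S, a * y = y * a) → x * y = y * x) →
      x * U = U * x → ∃ c : 𝕜, x = c • (1 : E →L[𝕜] E))
    {b : E →L[𝕜] E} (hb : b ∈ S) :
    Tendsto (fun n => ofCLM (conjAverage 𝕜 U b n)) atTop (𝓝 (ofCLM (⟪Ω, b Ω⟫_𝕜 • 1))) := by
  refine tendsto_ofCLM_of_forall_ultrafilter (norm_conjAverage_le hU b) fun 𝔘 h𝔘 T hT => ?_
  have hT_comm : ∀ y, (∀ s ∈ S, s * y = y * s) → T * y = y * T := fun y hy =>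
    commute_of_tendsto_ofCLM_of_forall_commute hT
      (Commute.conjAverage_left fun k => hy _ (pow_mul_mul_star_pow_mem hUS hb k))
  obtain ⟨z, rfl⟩ := htriv T hT_comm <| commute_of_tendsto_ofCLM hT
    ((tendsto_mul_conjAverage_sub_conjAverage_mul hU b).mono_left h𝔘)
  have hstate : ⟪Ω, (z • 1 : E →L[𝕜] E) Ω⟫_𝕜 = ⟪Ω, b Ω⟫_𝕜 :=
    tendsto_nhds_unique (tendsto_iff_forall_inner_apply_tendsto.1 hT Ω Ω)
      (tendsto_const_nhds.congr' ((eventually_ne_atTop 0).mono fun n hn =>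
        (inner_conjAverage_apply_self hU.1 hUΩ b hn).symm) |>.mono_left h𝔘)
  have hΩΩ : ⟪Ω, Ω⟫_𝕜 = 1 := by rw [inner_self_eq_norm_sq_to_K, hΩ]; norm_num
  rw [← hstate, smul_apply, one_apply_eq_self, inner_smul_right, hΩΩ, mul_one]

theorem trivialFixedDoubleCommutant_implies_convergenceToEquilibrium_general
    {H : Type*} [NormedAddCommGroup H] [InnerProductSpace ℂ H] [CompleteSpace H]
    (S : StarSubalgebra ℂ (H →L[ℂ] H)) (Ω : H) (hΩ : ‖Ω‖ = 1)
    (U : H →L[ℂ] H)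
    (hU : U * adjoint U = 1 ∧ adjoint U * U = 1)
    (hUΩ : U Ω = Ω)
    (hUS : ∀ a ∈ S, U * a * adjoint U ∈ S)
    (htriv : ∀ x : H →L[ℂ] H,
      (∀ y : H →L[ℂ] H, (∀ a ∈ S, a * y = y * a) → x * y = y * x) →
      x * U = U * x → ∃ c : ℂ, x = c • (1 : H →L[ℂ] H)) :
    ∀ a ∈ S, ∀ b ∈ S, ∀ c ∈ S,
      Tendsto (fun n : ℕ => (n : ℂ)⁻¹ *
          ∑ k ∈ Finset.range n,
            (inner ℂ Ω ((a * (U ^ k * b * (adjoint U) ^ k) * c) Ω) : ℂ))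
        atTop (nhds ((inner ℂ Ω ((a * c) Ω) : ℂ) * inner ℂ Ω (b Ω))) := by
  intro a _ b hb c _
  have hlim := tendsto_ofCLM_conjAverage (S := S) ⟨hU.2, hU.1⟩ hUS hΩ hUΩ htriv hb
  have hsum : ∀ n : ℕ,
      (n : ℂ)⁻¹ * ∑ k ∈ range n, ⟪Ω, (a * (U ^ k * b * adjoint U ^ k) * c) Ω⟫_ℂ
        = ⟪adjoint a Ω, conjAverage ℂ U b n (c Ω)⟫_ℂ := fun n => by
    simp only [conjAverage, smul_apply, _root_.sum_apply, inner_smul_right, inner_sum,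
      adjoint_inner_left, mul_apply_eq_comp, star_eq_adjoint]
  have hvalue : ⟪adjoint a Ω, (⟪Ω, b Ω⟫_ℂ • (1 : H →L[ℂ] H)) (c Ω)⟫_ℂ
      = ⟪Ω, (a * c) Ω⟫_ℂ * ⟪Ω, b Ω⟫_ℂ := by
    rw [smul_apply, one_apply_eq_self, inner_smul_right, adjoint_inner_left, mul_apply_eq_comp,
      mul_comm]
  simpa only [hsum, hvalue, ContinuousLinearMapWOT.ofCLM_apply] using
    tendsto_iff_forall_inner_apply_tendsto.1 hlim (c Ω) (adjoint a Ω)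

/-- for a unital *-subalgebra `S ⊆ B(H)` with cyclic unit vector `Ω` and
a unitary `U` with `UΩ = Ω` and `U S U* ⊆ S`, if the only elements of the double
commutant of `S` commuting with `U` are the scalars, then the system converges to
equilibrium: `(1/n) Σ_{k<n} ⟨a (U^k b U^{-k}) c Ω, Ω⟩ → ⟨a c Ω, Ω⟩ ⟨b Ω, Ω⟩`. -/
theorem trivialFixedDoubleCommutant_implies_convergenceToEquilibrium
    {H : Type*} [NormedAddCommGroup H] [InnerProductSpace ℂ H] [CompleteSpace H]
    (S : StarSubalgebra ℂ (H →L[ℂ] H)) (Ω : H) (hΩ : ‖Ω‖ = 1)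
    (hcyc : Dense ((fun T : H →L[ℂ] H => T Ω) '' (S : Set (H →L[ℂ] H))))
    (U : H →L[ℂ] H)
    (hU : U * adjoint U = 1 ∧ adjoint U * U = 1)
    (hUΩ : U Ω = Ω)
    (hUS : ∀ a ∈ S, U * a * adjoint U ∈ S)
    (htriv : ∀ x : H →L[ℂ] H,
      (∀ y : H →L[ℂ] H, (∀ a ∈ S, a * y = y * a) → x * y = y * x) →
      x * U = U * x → ∃ c : ℂ, x = c • (1 : H →L[ℂ] H)) :
    ∀ a ∈ S, ∀ b ∈ S, ∀ c ∈ S,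
      Tendsto (fun n : ℕ => (n : ℂ)⁻¹ *
          ∑ k ∈ Finset.range n,
            (inner ℂ Ω ((a * (U ^ k * b * (adjoint U) ^ k) * c) Ω) : ℂ))
        atTop (nhds ((inner ℂ Ω ((a * c) Ω) : ℂ) * inner ℂ Ω (b Ω))) :=
  trivialFixedDoubleCommutant_implies_convergenceToEquilibrium_general S Ω hΩ U hU hUΩ hUS htriv
end

section
/- The norm closure of the unital *-subalgebra of B(H) generated by the selfadjoint parts of the Boolean annihilators, {a_i + a_i* : i ∈ ℤ}, coincides with the norm closure of the unital *-subalgebra of B(H) generated by the Boolean annihilators {a_i : i ∈ ℤ}. -/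
/-!
Write `s_i = a_i + a_i*`. The operator `s_i` swaps `e_#` and `e_i` and kills every other basis
vector, so `s_i²` is the projection onto `span {e_#, e_i}`, while `s_{i+1} s_i = |e_{i+1}⟩⟨e_i|`
and hence `s_i s_{i+1} s_{i+1} s_i = |e_i⟩⟨e_i|`. Their difference is the vacuum projection
`|e_#⟩⟨e_#|`, and `|e_#⟩⟨e_#| s_i = a_i`. Thus every `a_i` is a polynomial in the `s_j`, and the
two unital *-algebras already coincide before taking closures.
-/

noncomputable section

/-- The Hilbert space `ℓ²({#} ∪ ℤ)`, with `#` encoded as `none : Option ℤ`. -/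
abbrev BooleanSpace : Type := lp (fun _ : Option ℤ => ℂ) 2

/-- The canonical orthonormal basis vectors `e_x`, `x ∈ {#} ∪ ℤ`;
`e none` is the vacuum vector `e_#`. -/
def e (x : Option ℤ) : BooleanSpace := lp.single 2 x (1 : ℂ)

/-- The Boolean annihilator `a_i : ξ ↦ ⟨ξ, e_i⟩ e_#`. -/
def ann (i : ℤ) : BooleanSpace →L[ℂ] BooleanSpace :=
  (innerSL ℂ (e (some i))).smulRight (e none)

open InnerProductSpace ContinuousLinearMap

theorem StarAlgebra.adjoin_range_add_star_le {R A ι : Type*} [CommSemiring R] [StarRing R]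
    [Semiring A] [StarRing A] [Algebra R A] [StarModule R A] (a : ι → A) :
    StarAlgebra.adjoin R (Set.range fun i => a i + star (a i))
      ≤ StarAlgebra.adjoin R (Set.range a) := by
  rw [StarAlgebra.adjoin_le_iff, Set.range_subset_iff]
  intro i
  have ha : a i ∈ StarAlgebra.adjoin R (Set.range a) := StarAlgebra.subset_adjoin R _ ⟨i, rfl⟩
  exact add_mem ha (star_mem ha)

section SymmRankOne

variable (𝕜 : Type*) {E : Type*} [RCLike 𝕜] [NormedAddCommGroup E] [InnerProductSpace 𝕜 E]

def symmRankOne (x y : E) : E →L[𝕜] E := rankOne 𝕜 x y + rankOne 𝕜 y x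

variable {𝕜} {ι : Type*} {b : ι → E}

theorem symmRankOne_mul_self (hb : Orthonormal 𝕜 b) {k l : ι} (hkl : k ≠ l) :
    symmRankOne 𝕜 (b k) (b l) * symmRankOne 𝕜 (b k) (b l)
      = rankOne 𝕜 (b k) (b k) + rankOne 𝕜 (b l) (b l) := by
  simp [symmRankOne, mul_def, add_comp, comp_add, rankOne_comp_rankOne, hb.1,
    hb.inner_eq_zero hkl, hb.inner_eq_zero hkl.symm, add_comm]

theorem symmRankOne_mul_symmRankOne (hb : Orthonormal 𝕜 b) {k l m : ι} (hkl : k ≠ l)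
    (hkm : k ≠ m) (hlm : l ≠ m) :
    symmRankOne 𝕜 (b k) (b m) * symmRankOne 𝕜 (b k) (b l) = rankOne 𝕜 (b m) (b l) := by
  simp [symmRankOne, mul_def, add_comp, comp_add, rankOne_comp_rankOne, hb.1,
    hb.inner_eq_zero hkl, hb.inner_eq_zero hkm.symm, hb.inner_eq_zero hlm.symm]

theorem rankOne_self_mul_symmRankOne (hb : Orthonormal 𝕜 b) {k l : ι} (hkl : k ≠ l) :
    rankOne 𝕜 (b k) (b k) * symmRankOne 𝕜 (b k) (b l) = rankOne 𝕜 (b k) (b l) := by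
  simp [symmRankOne, mul_def, comp_add, rankOne_comp_rankOne, hb.1, hb.inner_eq_zero hkl]

theorem rankOne_eq_symmRankOne_polynomial (hb : Orthonormal 𝕜 b) {k l m : ι} (hkl : k ≠ l)
    (hkm : k ≠ m) (hlm : l ≠ m) :
    rankOne 𝕜 (b k) (b l) =
      (symmRankOne 𝕜 (b k) (b l) * symmRankOne 𝕜 (b k) (b l)
        - symmRankOne 𝕜 (b k) (b l) * symmRankOne 𝕜 (b k) (b m)
          * (symmRankOne 𝕜 (b k) (b m) * symmRankOne 𝕜 (b k) (b l)))
        * symmRankOne 𝕜 (b k) (b l) := by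
  have hlml : rankOne 𝕜 (b l) (b m) * rankOne 𝕜 (b m) (b l) = rankOne 𝕜 (b l) (b l) := by
    simp [mul_def, rankOne_comp_rankOne, hb.1]
  rw [symmRankOne_mul_self hb hkl, symmRankOne_mul_symmRankOne hb hkl hkm hlm,
    symmRankOne_mul_symmRankOne hb hkm hkl hlm.symm, hlml, add_sub_cancel_right,
    rankOne_self_mul_symmRankOne hb hkl]

end SymmRankOne

theorem orthonormal_e : Orthonormal ℂ e := by
  classical
  rw [orthonormal_iff_ite]
  intro x y
  simp [e, lp.inner_single_left, lp.single_apply, Pi.single_apply]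

theorem ann_eq_rankOne (i : ℤ) : ann i = rankOne ℂ (e none) (e (some i)) := rfl

theorem ann_add_adjoint_ann (i : ℤ) :
    ann i + adjoint (ann i) = symmRankOne ℂ (e none) (e (some i)) := by
  rw [ann_eq_rankOne, adjoint_rankOne, symmRankOne]

/-- the norm closure of the unital *-subalgebra generated by the
selfadjoint parts `{a_i + a_i* : i ∈ ℤ}` of the Boolean annihilators coincides with
the norm closure of the unital *-subalgebra generated by the annihilators
`{a_i : i ∈ ℤ}`. -/
theorem closure_starAlgebra_selfadjointParts_eq_closure_starAlgebra_ann :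
    (StarAlgebra.adjoin ℂ
        (Set.range fun i : ℤ => ann i + ContinuousLinearMap.adjoint (ann i))).topologicalClosure
      = (StarAlgebra.adjoin ℂ (Set.range ann)).topologicalClosure := by
  congr 1
  refine le_antisymm ?_ ?_
  · simpa only [star_eq_adjoint] using StarAlgebra.adjoin_range_add_star_le (R := ℂ) ann
  rw [StarAlgebra.adjoin_le_iff, Set.range_subset_iff]
  intro i
  have hs (j : ℤ) : symmRankOne ℂ (e none) (e (some j)) ∈ StarAlgebra.adjoin ℂ
      (Set.range fun i : ℤ => ann i + adjoint (ann i)) := by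
    rw [← ann_add_adjoint_ann]
    exact StarAlgebra.subset_adjoin ℂ _ ⟨j, rfl⟩
  rw [SetLike.mem_coe, ann_eq_rankOne, rankOne_eq_symmRankOne_polynomial orthonormal_e
    (m := some (i + 1)) (by simp) (by simp) (by simp)]
  exact mul_mem (sub_mem (mul_mem (hs i) (hs i))
    (mul_mem (mul_mem (hs i) (hs (i + 1))) (mul_mem (hs (i + 1)) (hs i)))) (hs i)
end
end
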